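/- arXiv:solv-int/9903015 — 2 statements merged into one kernel-verified Lean document; each statement's English description precedes it below -/
import Mathlib

section
/- For N ≥ 1, the Schur polynomials attached to staircase partitions satisfy (2N+1) s_{(N+2,N-1,N-2,…,1)}(t) = [t_1²/2 + (2N+1)t_2 + ∑_{m≥1} (m+2) t_{m+2} ∂/∂t_m] s_{(N,N-1,…,1)}(t). -/
/-- The polynomials `p_k(t₁,t₂,…)` defined by `exp(∑_{l≥1} t_l λ^l) = ∑_{k≥0} p_k λ^k`,
in variables `X m = t_{m+1}`. -/
noncomputable def pSchur : ℕ → MvPolynomial ℕ ℝ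
  | 0 => 1
  | (k + 1) =>
      (((k : ℝ) + 1)⁻¹) •
        ∑ l ∈ Finset.range (k + 1),
          (((l : ℝ) + 1) • (MvPolynomial.X l * pSchur (k - l)))
  termination_by k => k
  decreasing_by simp_wf <;> omega

/-- `p_k` for integer index, `p_k = 0` for `k < 0`. -/
noncomputable def pSchurZ (k : ℤ) : MvPolynomial ℕ ℝ :=
  if 0 ≤ k then pSchur k.toNat else 0

/-- Jacobi–Trudi determinant `s_{(i₁,…,i_N)} = det(p_{i_k - k + l})_{1≤k,l≤N}`. -/
noncomputable def schurJT (part : ℕ → ℤ) (N : ℕ) : MvPolynomial ℕ ℝ :=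
  Matrix.det (Matrix.of fun k l : Fin N =>
    pSchurZ (part (k : ℕ) - ((k : ℕ) : ℤ) + ((l : ℕ) : ℤ)))

/-- The staircase Schur polynomial `s_{(N,N-1,…,1)}`. -/
noncomputable def sStair (N : ℕ) : MvPolynomial ℕ ℝ :=
  schurJT (fun k => (N : ℤ) - k) N

/-- The Schur polynomial `s_{(N+2,N-1,N-2,…,1)}`. -/
noncomputable def sStairPlus (N : ℕ) : MvPolynomial ℕ ℝ :=
  schurJT (fun k => if k = 0 then (N : ℤ) + 2 else (N : ℤ) - k) N

open MvPolynomial Finset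

lemma pSchur_succ (k : ℕ) : pSchur (k+1) = (((k : ℝ) + 1)⁻¹) •
        ∑ l ∈ Finset.range (k + 1),
          (((l : ℝ) + 1) • (MvPolynomial.X l * pSchur (k - l))) := by
  rw [pSchur]

lemma pSchur_succ' (k : ℕ) : ((k : ℝ) + 1) • pSchur (k+1) =
        ∑ l ∈ Finset.range (k + 1),
          (((l : ℝ) + 1) • (MvPolynomial.X l * pSchur (k - l))) := by
  rw [pSchur_succ, smul_smul, mul_inv_cancel₀ (by positivity), one_smul]

lemma pSchurZ_neg {k : ℤ} (h : k < 0) : pSchurZ k = 0 := if_neg (not_le.2 h)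

lemma pSchurZ_coe (k : ℕ) : pSchurZ k = pSchur k := by
  simp [pSchurZ]

lemma pSchurZ_zero : pSchurZ 0 = 1 := by
  rw [show ((0:ℤ)) = ((0:ℕ):ℤ) by norm_num, pSchurZ_coe, pSchur]

lemma pSchur_one : pSchur 1 = X 0 := by
  rw [show (1 = 0 + 1) from rfl, pSchur_succ]
  simp [pSchur]

lemma pSchur_two : pSchur 2 = X 1 + (2⁻¹ : ℝ) • (X 0 ^2) := by
  rw [show (2 = 1 + 1) from rfl, pSchur_succ]
  rw [Finset.sum_range_succ, Finset.sum_range_one]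
  simp [pSchur, pSchur_one]
  rw [sq]
  norm_num
  abel

lemma pSchurZ_rec (n : ℤ) (I : ℕ) (h : n ≤ I) :
    (n : ℝ) • pSchurZ n = ∑ i ∈ range I, ((i:ℝ)+1) • (X i * pSchurZ (n - 1 - i)) := by
  rcases le_or_gt n 0 with hn | hn
  · have hR : ∀ i ∈ range I, ((i:ℝ)+1) • (X i * pSchurZ (n - 1 - i)) = 0 := by
      intro i _
      rw [pSchurZ_neg (by omega), mul_zero, smul_zero]
    rw [Finset.sum_eq_zero hR]
    rcases eq_or_lt_of_le hn with hn0 | hn0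
    · subst hn0; simp
    · rw [pSchurZ_neg hn0, smul_zero]
  · obtain ⟨k, hk⟩ : ∃ k : ℕ, n = (k : ℤ) + 1 := ⟨(n - 1).toNat, by omega⟩
    subst hk
    have hsub : range (k+1) ⊆ range I := by
      apply Finset.range_subset_range.2; omega
    rw [← Finset.sum_subset hsub (by
      intro i _ hi
      simp only [Finset.mem_range, not_lt] at hi
      rw [pSchurZ_neg (by omega), mul_zero, smul_zero])]
    have : ∀ i ∈ range (k+1), ((i:ℝ)+1) • (X i * pSchurZ ((k:ℤ) + 1 - 1 - i))
        = ((i:ℝ)+1) • (X i * pSchur (k - i)) := by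
      intro i hi
      simp only [Finset.mem_range] at hi
      rw [show ((k:ℤ) + 1 - 1 - i) = ((k - i : ℕ) : ℤ) by omega, pSchurZ_coe]
    rw [Finset.sum_congr rfl this, ← pSchur_succ']
    rw [show (((k:ℤ)+1 : ℤ) : ℝ) = (k:ℝ)+1 by push_cast; ring]
    rw [show ((k:ℤ)+1) = ((k+1 : ℕ):ℤ) by omega, pSchurZ_coe]

lemma smul_cancel {c : ℝ} (hc : c ≠ 0) {a b : MvPolynomial ℕ ℝ} (h : c • a = c • b) :
    a = b := by
  have := congrArg (fun x => c⁻¹ • x) h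
  simpa [smul_smul, inv_mul_cancel₀ hc] using this

lemma pderiv_pSchur (m k : ℕ) : pderiv m (pSchur k) = pSchurZ ((k:ℤ) - 1 - m) := by
  induction k using Nat.strong_induction_on with
  | _ k IH =>
    match k with
    | 0 =>
      have h0 : pSchur 0 = 1 := by rw [pSchur]
      rw [h0, Derivation.map_one_eq_zero,
        pSchurZ_neg (show ((0:ℕ):ℤ) - 1 - (m:ℤ) < 0 by omega)]
    | (k+1) =>
      have key : ((k:ℝ)+1) • (pderiv m (pSchur (k+1)))
          = (((k:ℤ) - m : ℤ) : ℝ) • pSchurZ ((k:ℤ) - m)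
            + (if m ∈ range (k+1) then ((m:ℝ)+1) • pSchur (k - m) else 0) := by
        rw [← Derivation.map_smul, pSchur_succ', map_sum]
        have hterm : ∀ i ∈ range (k+1),
            pderiv m (((i:ℝ)+1) • (X i * pSchur (k - i)))
            = ((i:ℝ)+1) • (X i * pSchurZ ((k:ℤ) - m - 1 - i))
              + ((i:ℝ)+1) • (pSchur (k-i) * pderiv m (X i)) := by
          intro i hi
          simp only [Finset.mem_range] at hi
          rw [Derivation.map_smul, Derivation.leibniz, smul_eq_mul, smul_eq_mul, smul_add,
            show (k:ℤ) - m - 1 - i = ((k - i:ℕ):ℤ) - 1 - m by omega, ← IH (k-i) (by omega)]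
        rw [Finset.sum_congr rfl hterm, Finset.sum_add_distrib]
        congr 1
        · rw [← pSchurZ_rec ((k:ℤ) - m) (k+1) (by omega)]
        · by_cases hm : m ∈ range (k+1)
          · rw [if_pos hm]
            rw [Finset.sum_eq_single_of_mem m hm (by
              intro i _ hne
              rw [pderiv_X_of_ne hne, mul_zero, smul_zero])]
            rw [pderiv_X_self, mul_one]
          · rw [if_neg hm]
            apply Finset.sum_eq_zero
            intro i hi
            rw [pderiv_X_of_ne (by rintro rfl; exact hm hi), mul_zero, smul_zero]
      by_cases hm : m ≤ k
      · have h1 : pSchur (k - m) = pSchurZ ((k:ℤ) - m) := by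
          rw [show ((k:ℤ) - m) = ((k - m : ℕ) : ℤ) by omega, pSchurZ_coe]
        rw [if_pos (Finset.mem_range.2 (by omega)), h1, ← add_smul] at key
        have h2 : (((k:ℤ) - m : ℤ) : ℝ) + ((m:ℝ)+1) = (k:ℝ)+1 := by push_cast; ring
        rw [h2] at key
        rw [smul_cancel (show ((k:ℝ)+1) ≠ 0 by positivity) key]
        congr 1
        omega
      · rw [if_neg (by simp only [Finset.mem_range]; omega)] at key
        rw [pSchurZ_neg (show ((k:ℤ) - m) < 0 by omega), smul_zero, add_zero] at key
        rw [smul_cancel (show ((k:ℝ)+1) ≠ 0 by positivity)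
          (key.trans (smul_zero ((k:ℝ)+1)).symm)]
        rw [pSchurZ_neg (by omega)]

lemma pderiv_pSchurZ (m : ℕ) (n : ℤ) : pderiv m (pSchurZ n) = pSchurZ (n - 1 - m) := by
  rcases le_or_gt 0 n with hn | hn
  · obtain ⟨k, rfl⟩ : ∃ k : ℕ, n = (k : ℤ) := ⟨n.toNat, by omega⟩
    rw [pSchurZ_coe, pderiv_pSchur]
  · rw [pSchurZ_neg hn, map_zero, pSchurZ_neg (by omega)]

lemma derivation_prod {ι : Type*} [DecidableEq ι] (D : Derivation ℝ (MvPolynomial ℕ ℝ) (MvPolynomial ℕ ℝ))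
    (s : Finset ι) (f : ι → MvPolynomial ℕ ℝ) :
    D (∏ i ∈ s, f i) = ∑ i ∈ s, D (f i) * ∏ j ∈ s.erase i, f j := by
  induction s using Finset.induction_on with
  | empty => simp [Derivation.map_one_eq_zero]
  | @insert a s ha IH =>
    rw [Finset.prod_insert ha, Derivation.leibniz, smul_eq_mul, smul_eq_mul, IH,
      Finset.sum_insert ha, Finset.erase_insert ha, Finset.mul_sum]
    rw [add_comm]
    congr 1
    · ring
    · apply Finset.sum_congr rfl
      intro i hi
      rw [Finset.erase_insert_of_ne (by rintro rfl; exact ha hi)]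
      rw [Finset.prod_insert (fun h => ha (Finset.erase_subset _ _ h))]
      ring

lemma derivation_det {n : ℕ} (D : Derivation ℝ (MvPolynomial ℕ ℝ) (MvPolynomial ℕ ℝ))
    (A : Matrix (Fin n) (Fin n) (MvPolynomial ℕ ℝ)) :
    D A.det = ∑ k, (A.updateRow k (fun l => D (A k l))).det := by
  classical
  simp only [Matrix.det_apply]
  have lhs : D (∑ σ : Equiv.Perm (Fin n), Equiv.Perm.sign σ • ∏ i, A (σ i) i)
      = ∑ σ : Equiv.Perm (Fin n), Equiv.Perm.sign σ •
          ∑ i, D (A (σ i) i) * ∏ j ∈ Finset.univ.erase i, A (σ j) j := by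
    rw [map_sum]
    apply Finset.sum_congr rfl
    intro σ _
    rw [Units.smul_def, Units.smul_def, map_zsmul, derivation_prod]
  rw [lhs]
  rw [Finset.sum_comm]
  apply Finset.sum_congr rfl
  intro σ _
  rw [Finset.smul_sum]
  rw [← Equiv.sum_comp σ (fun k => Equiv.Perm.sign σ • ∏ i, (A.updateRow k fun l => D (A k l)) (σ i) i)]
  apply Finset.sum_congr rfl
  intro i₀ _
  congr 1
  have hprod : ∀ i : Fin n, (A.updateRow (σ i₀) fun l => D (A (σ i₀) l)) (σ i) i
      = if i = i₀ then D (A (σ i₀) i) else A (σ i) i := by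
    intro i
    rw [Matrix.updateRow_apply]
    congr 1
    simp [EmbeddingLike.apply_eq_iff_eq]
  rw [Finset.prod_congr rfl (fun i _ => hprod i)]
  rw [← Finset.mul_prod_erase Finset.univ _ (Finset.mem_univ i₀), if_pos rfl]
  congr 1
  apply Finset.prod_congr rfl
  intro j hj
  rw [if_neg (Finset.ne_of_mem_erase hj)]

lemma det_updateRow_finset_sum {n : ℕ} {ι : Type*} (A : Matrix (Fin n) (Fin n) (MvPolynomial ℕ ℝ))
    (j : Fin n) (s : Finset ι) (w : ι → Fin n → MvPolynomial ℕ ℝ) :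
    (A.updateRow j (∑ i ∈ s, w i)).det = ∑ i ∈ s, (A.updateRow j (w i)).det := by
  classical
  induction s using Finset.induction_on with
  | empty =>
    rw [Finset.sum_empty, Finset.sum_empty]
    apply Matrix.det_eq_zero_of_row_eq_zero j
    intro l
    simp
  | @insert a s ha IH =>
    rw [Finset.sum_insert ha, Finset.sum_insert ha, Matrix.det_updateRow_add, IH]

lemma det_updateRow_eq_sum {n : ℕ} (A : Matrix (Fin n) (Fin n) (MvPolynomial ℕ ℝ))
    (k : Fin n) (w : Fin n → MvPolynomial ℕ ℝ) :
    (A.updateRow k w).det = ∑ l, w l * (A.updateRow k (Pi.single l 1)).det := by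
  have hw : w = ∑ l, w l • (Pi.single l 1 : Fin n → MvPolynomial ℕ ℝ) := by
    ext j
    simp [Pi.single_apply]
  rw [show A.updateRow k w = A.updateRow k (∑ l, w l • (Pi.single l 1 : Fin n → MvPolynomial ℕ ℝ))
      from by rw [← hw]]
  rw [det_updateRow_finset_sum]
  apply Finset.sum_congr rfl
  intro l _
  rw [Matrix.det_updateRow_smul]

lemma det_updateCol_eq_sum {n : ℕ} (A : Matrix (Fin n) (Fin n) (MvPolynomial ℕ ℝ))
    (l : Fin n) (v : Fin n → MvPolynomial ℕ ℝ) :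
    (A.updateCol l v).det = ∑ k, v k * (A.updateCol l (Pi.single k 1)).det := by
  rw [← Matrix.det_transpose, ← Matrix.updateRow_transpose, det_updateRow_eq_sum]
  apply Finset.sum_congr rfl
  intro k _
  rw [Matrix.updateRow_transpose, Matrix.det_transpose]

lemma cofactor_single_exchange {n : ℕ} (A : Matrix (Fin n) (Fin n) (MvPolynomial ℕ ℝ))
    (k l : Fin n) :
    (A.updateRow k (Pi.single l 1)).det = (A.updateCol l (Pi.single k 1)).det := by
  rw [← Matrix.adjugate_apply, ← Matrix.det_transpose, ← Matrix.updateRow_transpose,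
    ← Matrix.adjugate_apply, ← Matrix.adjugate_transpose, Matrix.transpose_apply]

lemma cofactor_exchange {n : ℕ} (A C : Matrix (Fin n) (Fin n) (MvPolynomial ℕ ℝ)) :
    ∑ k, (A.updateRow k (fun l => C k l)).det = ∑ l, (A.updateCol l (fun k => C k l)).det := by
  have h1 : ∀ k, (A.updateRow k (fun l => C k l)).det
      = ∑ l, C k l * (A.updateRow k (Pi.single l 1)).det := fun k => det_updateRow_eq_sum A k _
  have h2 : ∀ l, (A.updateCol l (fun k => C k l)).det
      = ∑ k, C k l * (A.updateCol l (Pi.single k 1)).det := fun l => det_updateCol_eq_sum A l _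
  simp only [h1, h2]
  rw [Finset.sum_comm]
  apply Finset.sum_congr rfl
  intro k _
  apply Finset.sum_congr rfl
  intro l _
  rw [cofactor_single_exchange]

lemma det_blocks {N : ℕ} (A : Matrix (Fin (N+2)) (Fin (N+2)) (MvPolynomial ℕ ℝ))
    (B : Matrix (Fin N) (Fin N) (MvPolynomial ℕ ℝ))
    (Dq : Matrix (Fin 2) (Fin 2) (MvPolynomial ℕ ℝ))
    (h11 : ∀ (i j : Fin N), A (Fin.castAdd 2 i) (Fin.castAdd 2 j) = B i j)
    (h21 : ∀ (i : Fin 2) (j : Fin N), A (Fin.natAdd N i) (Fin.castAdd 2 j) = 0)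
    (h22 : ∀ (i j : Fin 2), A (Fin.natAdd N i) (Fin.natAdd N j) = Dq i j) :
    A.det = B.det * Dq.det := by
  rw [← Matrix.det_submatrix_equiv_self (finSumFinEquiv : Fin N ⊕ Fin 2 ≃ Fin (N+2)) A]
  have : A.submatrix finSumFinEquiv finSumFinEquiv
      = Matrix.fromBlocks B (Matrix.of fun i j => A (Fin.castAdd 2 i) (Fin.natAdd N j)) 0 Dq := by
    refine Matrix.ext fun i j => ?_
    cases i with
    | inl i =>
      cases j with
      | inl j => simpa using h11 i j
      | inr j => simp [Matrix.submatrix_apply]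
    | inr i =>
      cases j with
      | inl j => simpa using h21 i j
      | inr j => simpa using h22 i j
  rw [this, Matrix.det_fromBlocks_zero₂₁]

def aaF (N k : ℕ) : ℤ := if k < N then (N:ℤ) - 2*k else -(k:ℤ)

noncomputable def Gm (N : ℕ) : Matrix (Fin (N+2)) (Fin (N+2)) (MvPolynomial ℕ ℝ) :=
  Matrix.of fun k l => pSchurZ (aaF N (k:ℕ) + ((l:ℕ):ℤ))

lemma Gm_apply (N : ℕ) (k l : Fin (N+2)) : Gm N k l = pSchurZ (aaF N (k:ℕ) + ((l:ℕ):ℤ)) := rfl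

lemma pSchurZ_one' : pSchurZ 1 = X 0 := by
  rw [show (1:ℤ) = ((1:ℕ):ℤ) by norm_num, pSchurZ_coe, pSchur_one]

lemma pSchurZ_two' : pSchurZ 2 = pSchur 2 := by
  rw [show (2:ℤ) = ((2:ℕ):ℤ) by norm_num, pSchurZ_coe]

lemma detGm (N : ℕ) : (Gm N).det = sStair N := by
  have h : (Gm N).det = (Matrix.of fun k l : Fin N =>
      pSchurZ ((N:ℤ) - (k:ℕ) - ((k : ℕ) : ℤ) + ((l : ℕ) : ℤ))).det
      * (!![1, X 0; 0, 1] : Matrix (Fin 2) (Fin 2) (MvPolynomial ℕ ℝ)).det := by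
    apply det_blocks
    · intro i j
      simp only [Gm, Matrix.of_apply, Fin.coe_castAdd]
      congr 2
      rw [aaF, if_pos i.isLt]
      ring
    · intro i j
      simp only [Gm, Matrix.of_apply, Fin.coe_natAdd, Fin.coe_castAdd]
      rw [aaF, if_neg (by omega)]
      exact pSchurZ_neg (by have := j.isLt; omega)
    · intro i j
      simp only [Gm, Matrix.of_apply, Fin.coe_natAdd]
      rw [aaF, if_neg (by omega)]
      fin_cases i <;> fin_cases j <;> simp
      · exact pSchurZ_zero
      · exact pSchurZ_one'
      · exact pSchurZ_neg (by norm_num)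
      · rw [pSchurZ_zero]
  rw [h, Matrix.det_fin_two_of, sStair, schurJT]
  simp

lemma det_updateRow_smul_real {n : ℕ} (A : Matrix (Fin n) (Fin n) (MvPolynomial ℕ ℝ))
    (k : Fin n) (c : ℝ) (w : Fin n → MvPolynomial ℕ ℝ) :
    (A.updateRow k (c • w)).det = c • (A.updateRow k w).det := by
  have h : c • w = (MvPolynomial.C c : MvPolynomial ℕ ℝ) • w := by
    funext l
    simp [MvPolynomial.smul_eq_C_mul]
  rw [h, Matrix.det_updateRow_smul, ← MvPolynomial.smul_eq_C_mul]

lemma det_updateCol_smul_real {n : ℕ} (A : Matrix (Fin n) (Fin n) (MvPolynomial ℕ ℝ))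
    (k : Fin n) (c : ℝ) (w : Fin n → MvPolynomial ℕ ℝ) :
    (A.updateCol k (c • w)).det = c • (A.updateCol k w).det := by
  have h : c • w = (MvPolynomial.C c : MvPolynomial ℕ ℝ) • w := by
    funext l
    simp [MvPolynomial.smul_eq_C_mul]
  rw [h, Matrix.det_updateCol_smul, ← MvPolynomial.smul_eq_C_mul]

lemma fin_sum_split2 {n : ℕ} (a b : Fin n) (hab : a ≠ b) (f : Fin n → MvPolynomial ℕ ℝ)
    (h : ∀ k, k ≠ a → k ≠ b → f k = 0) : ∑ k, f k = f a + f b := by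
  rw [← Finset.sum_pair hab]
  refine (Finset.sum_subset (Finset.subset_univ _) ?_).symm
  intro x _ hx
  simp only [Finset.mem_insert, Finset.mem_singleton, not_or] at hx
  exact h x hx.1 hx.2

lemma fin_sum_split1 {n : ℕ} (a : Fin n) (f : Fin n → MvPolynomial ℕ ℝ)
    (h : ∀ k, k ≠ a → f k = 0) : ∑ k, f k = f a :=
  Finset.sum_eq_single_of_mem a (Finset.mem_univ a) (fun b _ hb => h b hb)

lemma aaF_lt (N k : ℕ) (h : k < N) : aaF N k = (N:ℤ) - 2*k := if_pos h
lemma aaF_ge (N k : ℕ) (h : ¬ k < N) : aaF N k = -(k:ℤ) := if_neg h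

lemma aaF_step (N j : ℕ) (h1 : 1 ≤ j) (h2 : j ≤ N) : aaF N j + 2 = aaF N (j-1) := by
  simp only [aaF]
  split_ifs <;> push_cast <;> omega

-- the row-sum of shift-by-2 rows equals the column-sum (exchange identity)
noncomputable def sMuD (N : ℕ) : MvPolynomial ℕ ℝ :=
  ((Gm N).updateRow ⟨0, by omega⟩
    (fun l => pSchurZ (aaF N 0 + 2 + ((l:ℕ):ℤ)))).det

noncomputable def zD (N : ℕ) : MvPolynomial ℕ ℝ :=
  ((Gm N).updateRow ⟨N+1, by omega⟩
    (fun l => pSchurZ (aaF N (N+1) + 2 + ((l:ℕ):ℤ)))).det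

noncomputable def y1D (N : ℕ) : MvPolynomial ℕ ℝ :=
  ((Gm N).updateCol ⟨N, by omega⟩
    (fun k => pSchurZ (aaF N (k:ℕ) + 2 + ((N:ℕ):ℤ)))).det

noncomputable def y2D (N : ℕ) : MvPolynomial ℕ ℝ :=
  ((Gm N).updateCol ⟨N+1, by omega⟩
    (fun k => pSchurZ (aaF N (k:ℕ) + 2 + ((N+1:ℕ):ℤ)))).det

noncomputable def y3D (N : ℕ) : MvPolynomial ℕ ℝ :=
  ((Gm N).updateCol ⟨N+1, by omega⟩
    (fun k => pSchurZ (aaF N (k:ℕ) + 1 + ((N+1:ℕ):ℤ)))).det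

lemma pSchurZ_congr {a b : ℤ} (h : a = b) : pSchurZ a = pSchurZ b := by rw [h]

lemma sMuD_eq (N : ℕ) (hN : 1 ≤ N) : sMuD N = sStairPlus N := by
  have h : sMuD N = (Matrix.of fun k l : Fin N =>
      pSchurZ ((if (k:ℕ) = 0 then (N:ℤ)+2 else (N:ℤ)-(k:ℕ)) - ((k:ℕ):ℤ) + ((l:ℕ):ℤ))).det
      * (!![1, X 0; 0, 1] : Matrix (Fin 2) (Fin 2) (MvPolynomial ℕ ℝ)).det := by
    apply det_blocks
    · intro i j
      simp only [Matrix.updateRow_apply, Gm, Matrix.of_apply, Fin.coe_castAdd]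
      by_cases hi : (i:ℕ) = 0
      · rw [if_pos (by exact Fin.ext (by simpa using hi)), if_pos hi]
        apply pSchurZ_congr
        rw [aaF_lt N 0 (by omega)]
        omega
      · rw [if_neg (by intro hc; have := congrArg Fin.val hc; simp at this; exact hi this),
          if_neg hi]
        apply pSchurZ_congr
        rw [aaF_lt N i i.isLt]
        push_cast
        ring
    · intro i j
      simp only [Matrix.updateRow_apply, Gm, Matrix.of_apply, Fin.coe_natAdd, Fin.coe_castAdd]
      rw [if_neg (by intro hc; have := congrArg Fin.val hc; simp at this; omega)]
      rw [aaF_ge N _ (by omega)]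
      exact pSchurZ_neg (by have := j.isLt; omega)
    · intro i j
      simp only [Matrix.updateRow_apply, Gm, Matrix.of_apply, Fin.coe_natAdd]
      rw [if_neg (by intro hc; have := congrArg Fin.val hc; simp at this; omega)]
      rw [aaF_ge N _ (by omega)]
      fin_cases i <;> fin_cases j <;> simp
      · exact pSchurZ_zero
      · exact pSchurZ_one'
      · exact pSchurZ_neg (by norm_num)
      · rw [pSchurZ_zero]
  rw [h, Matrix.det_fin_two_of, sStairPlus, schurJT]
  simp

lemma y1D_eq (N : ℕ) : y1D N = sStair N * (pSchur 2 - X 0 * X 0) := by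
  have h : y1D N = (Matrix.of fun k l : Fin N =>
      pSchurZ ((N:ℤ) - (k:ℕ) - ((k:ℕ):ℤ) + ((l:ℕ):ℤ))).det
      * (!![pSchur 2, X 0; X 0, 1] : Matrix (Fin 2) (Fin 2) (MvPolynomial ℕ ℝ)).det := by
    apply det_blocks
    · intro i j
      simp only [Matrix.updateCol_apply, Gm, Matrix.of_apply, Fin.coe_castAdd]
      rw [if_neg (by intro hc; have := congrArg Fin.val hc; simp at this; have := j.isLt; omega)]
      apply pSchurZ_congr
      rw [aaF_lt N i i.isLt]
      ring
    · intro i j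
      simp only [Matrix.updateCol_apply, Gm, Matrix.of_apply, Fin.coe_natAdd, Fin.coe_castAdd]
      rw [if_neg (by intro hc; have := congrArg Fin.val hc; simp at this; have := j.isLt; omega)]
      rw [aaF_ge N _ (by omega)]
      exact pSchurZ_neg (by have := j.isLt; omega)
    · intro i j
      simp only [Matrix.updateCol_apply, Gm, Matrix.of_apply, Fin.coe_natAdd]
      rw [aaF_ge N _ (by omega)]
      fin_cases i <;> fin_cases j
      · rw [if_pos (Fin.ext (by simp)),
          pSchurZ_congr (show -((N+0:ℕ):ℤ) + 2 + ((N:ℕ):ℤ) = 2 by push_cast; ring), pSchurZ_two']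
        simp
      · rw [if_neg (by intro hc; have := congrArg Fin.val hc; simp at this),
          pSchurZ_congr (show -((N+0:ℕ):ℤ) + ((N+1:ℕ):ℤ) = 1 by push_cast; ring), pSchurZ_one']
        simp
      · rw [if_pos (Fin.ext (by simp)),
          pSchurZ_congr (show -((N+1:ℕ):ℤ) + 2 + ((N:ℕ):ℤ) = 1 by push_cast; ring), pSchurZ_one']
        simp
      · rw [if_neg (by intro hc; have := congrArg Fin.val hc; simp at this),
          pSchurZ_congr (show -((N+1:ℕ):ℤ) + ((N+1:ℕ):ℤ) = 0 by push_cast; ring), pSchurZ_zero]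
        simp
  rw [h, Matrix.det_fin_two_of, sStair, schurJT]
  simp

lemma y2D_eq (N : ℕ) : y2D N = sStair N * pSchur 2 := by
  have h : y2D N = (Matrix.of fun k l : Fin N =>
      pSchurZ ((N:ℤ) - (k:ℕ) - ((k:ℕ):ℤ) + ((l:ℕ):ℤ))).det
      * (!![1, pSchurZ 3; 0, pSchur 2] : Matrix (Fin 2) (Fin 2) (MvPolynomial ℕ ℝ)).det := by
    apply det_blocks
    · intro i j
      simp only [Matrix.updateCol_apply, Gm, Matrix.of_apply, Fin.coe_castAdd]
      rw [if_neg (by intro hc; have := congrArg Fin.val hc; simp at this; have := j.isLt; omega)]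
      apply pSchurZ_congr
      rw [aaF_lt N i i.isLt]
      ring
    · intro i j
      simp only [Matrix.updateCol_apply, Gm, Matrix.of_apply, Fin.coe_natAdd, Fin.coe_castAdd]
      rw [if_neg (by intro hc; have := congrArg Fin.val hc; simp at this; have := j.isLt; omega)]
      rw [aaF_ge N _ (by omega)]
      exact pSchurZ_neg (by have := j.isLt; omega)
    · intro i j
      simp only [Matrix.updateCol_apply, Gm, Matrix.of_apply, Fin.coe_natAdd]
      rw [aaF_ge N _ (by omega)]
      fin_cases i <;> fin_cases j
      · rw [if_neg (by intro hc; have := congrArg Fin.val hc; simp at this),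
          pSchurZ_congr (show -((N+0:ℕ):ℤ) + ((N+0:ℕ):ℤ) = 0 by push_cast; ring), pSchurZ_zero]
        simp
      · rw [if_pos (Fin.ext (by simp)),
          pSchurZ_congr (show -((N+0:ℕ):ℤ) + 2 + ((N+1:ℕ):ℤ) = 3 by push_cast; ring)]
        simp
      · rw [if_neg (by intro hc; have := congrArg Fin.val hc; simp at this)]
        rw [pSchurZ_congr (show -((N+1:ℕ):ℤ) + ((N+0:ℕ):ℤ) = -1 by push_cast; ring)]
        rw [pSchurZ_neg (by norm_num)]
        simp
      · rw [if_pos (Fin.ext (by simp)),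
          pSchurZ_congr (show -((N+1:ℕ):ℤ) + 2 + ((N+1:ℕ):ℤ) = 2 by push_cast; ring), pSchurZ_two']
        simp
  rw [h, Matrix.det_fin_two_of, sStair, schurJT]
  simp

lemma y3D_eq (N : ℕ) : y3D N = sStair N * X 0 := by
  have h : y3D N = (Matrix.of fun k l : Fin N =>
      pSchurZ ((N:ℤ) - (k:ℕ) - ((k:ℕ):ℤ) + ((l:ℕ):ℤ))).det
      * (!![1, pSchur 2; 0, X 0] : Matrix (Fin 2) (Fin 2) (MvPolynomial ℕ ℝ)).det := by
    apply det_blocks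
    · intro i j
      simp only [Matrix.updateCol_apply, Gm, Matrix.of_apply, Fin.coe_castAdd]
      rw [if_neg (by intro hc; have := congrArg Fin.val hc; simp at this; have := j.isLt; omega)]
      apply pSchurZ_congr
      rw [aaF_lt N i i.isLt]
      ring
    · intro i j
      simp only [Matrix.updateCol_apply, Gm, Matrix.of_apply, Fin.coe_natAdd, Fin.coe_castAdd]
      rw [if_neg (by intro hc; have := congrArg Fin.val hc; simp at this; have := j.isLt; omega)]
      rw [aaF_ge N _ (by omega)]
      exact pSchurZ_neg (by have := j.isLt; omega)
    · intro i j
      simp only [Matrix.updateCol_apply, Gm, Matrix.of_apply, Fin.coe_natAdd]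
      rw [aaF_ge N _ (by omega)]
      fin_cases i <;> fin_cases j
      · rw [if_neg (by intro hc; have := congrArg Fin.val hc; simp at this),
          pSchurZ_congr (show -((N+0:ℕ):ℤ) + ((N+0:ℕ):ℤ) = 0 by push_cast; ring), pSchurZ_zero]
        simp
      · rw [if_pos (Fin.ext (by simp)),
          pSchurZ_congr (show -((N+0:ℕ):ℤ) + 1 + ((N+1:ℕ):ℤ) = 2 by push_cast; ring), pSchurZ_two']
        simp
      · rw [if_neg (by intro hc; have := congrArg Fin.val hc; simp at this)]
        rw [pSchurZ_congr (show -((N+1:ℕ):ℤ) + ((N+0:ℕ):ℤ) = -1 by push_cast; ring)]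
        rw [pSchurZ_neg (by norm_num)]
        simp
      · rw [if_pos (Fin.ext (by simp)),
          pSchurZ_congr (show -((N+1:ℕ):ℤ) + 1 + ((N+1:ℕ):ℤ) = 1 by push_cast; ring), pSchurZ_one']
        simp
  rw [h, Matrix.det_fin_two_of, sStair, schurJT]
  simp

lemma row2_zero (N : ℕ) (k : Fin (N+2)) (h1 : (k:ℕ) ≠ 0) (h2 : (k:ℕ) ≠ N+1) :
    ((Gm N).updateRow k (fun l => pSchurZ (aaF N (k:ℕ) + 2 + ((l:ℕ):ℤ)))).det = 0 := by
  have hk : (k:ℕ) < N + 2 := k.isLt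
  have hrow : (fun l : Fin (N+2) => pSchurZ (aaF N (k:ℕ) + 2 + ((l:ℕ):ℤ)))
      = Gm N ⟨(k:ℕ)-1, by omega⟩ := by
    funext l
    rw [Gm_apply]
    apply pSchurZ_congr
    have h := aaF_step N (k:ℕ) (by omega) (by omega)
    rw [show ((⟨(k:ℕ)-1, by omega⟩ : Fin (N+2)):ℕ) = (k:ℕ)-1 from rfl, ← h]
  rw [hrow]
  exact Matrix.det_updateRow_eq_zero (Fin.ne_of_val_ne (show (k:ℕ)-1 ≠ (k:ℕ) by omega))

lemma col2_zero (N : ℕ) (l : Fin (N+2)) (h1 : (l:ℕ) ≠ N) (h2 : (l:ℕ) ≠ N+1) :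
    ((Gm N).updateCol l (fun k => pSchurZ (aaF N (k:ℕ) + 2 + ((l:ℕ):ℤ)))).det = 0 := by
  have hl : (l:ℕ) < N := by have := l.isLt; omega
  have hcol : (fun k : Fin (N+2) => pSchurZ (aaF N (k:ℕ) + 2 + ((l:ℕ):ℤ)))
      = fun k => Gm N k ⟨(l:ℕ)+2, by omega⟩ := by
    funext k
    rw [Gm_apply]
    apply pSchurZ_congr
    rw [show ((⟨(l:ℕ)+2, by omega⟩ : Fin (N+2)):ℕ) = (l:ℕ)+2 from rfl]
    push_cast
    ring
  rw [hcol]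
  exact Matrix.det_updateCol_eq_zero (Fin.ne_of_val_ne (by simp))

lemma col1_zero (N : ℕ) (l : Fin (N+2)) (h2 : (l:ℕ) ≠ N+1) :
    ((Gm N).updateCol l (fun k => pSchurZ (aaF N (k:ℕ) + 1 + ((l:ℕ):ℤ)))).det = 0 := by
  have hl : (l:ℕ) < N+1 := by have := l.isLt; omega
  have hcol : (fun k : Fin (N+2) => pSchurZ (aaF N (k:ℕ) + 1 + ((l:ℕ):ℤ)))
      = fun k => Gm N k ⟨(l:ℕ)+1, by omega⟩ := by
    funext k
    rw [Gm_apply]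
    apply pSchurZ_congr
    rw [show ((⟨(l:ℕ)+1, by omega⟩ : Fin (N+2)):ℕ) = (l:ℕ)+1 from rfl]
    push_cast
    ring
  rw [hcol]
  exact Matrix.det_updateCol_eq_zero (Fin.ne_of_val_ne (by simp))

lemma exchange2 (N : ℕ) : sMuD N + zD N = y1D N + y2D N := by
  have ex := cofactor_exchange (Gm N)
    (Matrix.of fun k l => pSchurZ (aaF N (k:ℕ) + 2 + ((l:ℕ):ℤ)))
  simp only [Matrix.of_apply] at ex
  rw [fin_sum_split2 (⟨0, by omega⟩ : Fin (N+2)) (⟨N+1, by omega⟩ : Fin (N+2))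
      (Fin.ne_of_val_ne (show (0:ℕ) ≠ N+1 by omega))
      _ (fun k hk1 hk2 => row2_zero N k
        (fun h => hk1 (Fin.ext h)) (fun h => hk2 (Fin.ext h)))] at ex
  rw [fin_sum_split2 (⟨N, by omega⟩ : Fin (N+2)) (⟨N+1, by omega⟩ : Fin (N+2))
      (Fin.ne_of_val_ne (show (N:ℕ) ≠ N+1 by omega))
      _ (fun l hl1 hl2 => col2_zero N l
        (fun h => hl1 (Fin.ext h)) (fun h => hl2 (Fin.ext h)))] at ex
  exact ex

lemma exchange1 (N : ℕ) :
    ∑ k, ((Gm N).updateRow k (fun l => pSchurZ (aaF N (k:ℕ) + 1 + ((l:ℕ):ℤ)))).det = y3D N := by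
  have ex := cofactor_exchange (Gm N)
    (Matrix.of fun k l => pSchurZ (aaF N (k:ℕ) + 1 + ((l:ℕ):ℤ)))
  simp only [Matrix.of_apply] at ex
  rw [fin_sum_split1 (⟨N+1, by omega⟩ : Fin (N+2))
      _ (fun l hl => col1_zero N l (fun h => hl (Fin.ext h)))] at ex
  exact ex

lemma key_row (N : ℕ) (n : ℤ) (h : n ≤ 2*(N:ℤ)+4) :
    ∑ m ∈ range (2*N+2), ((m:ℝ)+3) • (X (m+2) * pSchurZ (n - 3 - m))
    = (n:ℝ) • pSchurZ n - X 0 * pSchurZ (n-1) - (2:ℝ) • (X 1 * pSchurZ (n-2)) := by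
  have hrec := pSchurZ_rec n (2*N+4) (by push_cast; omega)
  rw [show 2*N+4 = (2*N+3)+1 from rfl, Finset.sum_range_succ'] at hrec
  rw [show 2*N+3 = (2*N+2)+1 from rfl, Finset.sum_range_succ'] at hrec
  have h0 : (((0:ℕ):ℝ)+1) • (X 0 * pSchurZ (n - 1 - ((0:ℕ):ℤ)))
      = X 0 * pSchurZ (n-1) := by
    norm_num
  have h1 : (((0+1:ℕ):ℝ)+1) • (X (0+1) * pSchurZ (n - 1 - ((0+1:ℕ):ℤ)))
      = (2:ℝ) • (X 1 * pSchurZ (n-2)) := by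
    norm_num
    rw [show n - 1 - 1 = n - 2 by ring]
  rw [h0, h1] at hrec
  have hterms : ∀ i ∈ range (2*N+2),
      (((i+1+1:ℕ):ℝ)+1) • (X (i+1+1) * pSchurZ (n - 1 - ((i+1+1:ℕ):ℤ)))
      = ((i:ℝ)+3) • (X (i+2) * pSchurZ (n - 3 - i)) := by
    intro i _
    rw [show i+1+1 = i+2 from rfl, show ((i+2:ℕ):ℝ) + 1 = (i:ℝ)+3 by push_cast; ring,
      show n - 1 - ((i+2:ℕ):ℤ) = n - 3 - i by push_cast; ring]
  rw [Finset.sum_congr rfl hterms] at hrec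
  rw [hrec]
  abel

lemma det_updateRow_sub {n : ℕ} (A : Matrix (Fin n) (Fin n) (MvPolynomial ℕ ℝ))
    (k : Fin n) (u v : Fin n → MvPolynomial ℕ ℝ) :
    (A.updateRow k (u - v)).det = (A.updateRow k u).det - (A.updateRow k v).det := by
  have h : u - v = u + (-1:ℝ) • v := by
    funext l
    simp [sub_eq_add_neg]
  rw [h, Matrix.det_updateRow_add, det_updateRow_smul_real]
  rw [neg_one_smul ℝ]
  ring

lemma S1_eq (N : ℕ) (hN : 1 ≤ N) :
    ∑ k : Fin (N+2), (((aaF N (k:ℕ) : ℤ):ℝ)+2) •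
      ((Gm N).updateRow k (fun l => pSchurZ (aaF N (k:ℕ) + 2 + ((l:ℕ):ℤ)))).det
    = ((N:ℝ)+2) • sMuD N + ((1:ℝ)-(N:ℝ)) • zD N := by
  rw [fin_sum_split2 (⟨0, by omega⟩ : Fin (N+2)) (⟨N+1, by omega⟩ : Fin (N+2))
      (Fin.ne_of_val_ne (show (0:ℕ) ≠ N+1 by omega))
      _ (fun k hk1 hk2 => by
        rw [row2_zero N k (fun h => hk1 (Fin.ext h)) (fun h => hk2 (Fin.ext h)), smul_zero])]
  congr 1
  · congr 1
    rw [show ((⟨0, by omega⟩ : Fin (N+2)) : ℕ) = 0 from rfl, aaF_lt N 0 hN]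
    push_cast
    ring
  · congr 1
    rw [show ((⟨N+1, by omega⟩ : Fin (N+2)) : ℕ) = N+1 from rfl, aaF_ge N (N+1) (by omega)]
    push_cast
    ring

lemma S2_eq (N : ℕ) :
    ∑ k : Fin (N+2), ((Gm N).updateRow k
        (fun l => ((l:ℕ):ℝ) • pSchurZ (aaF N (k:ℕ) + 2 + ((l:ℕ):ℤ)))).det
    = (N:ℝ) • y1D N + ((N:ℝ)+1) • y2D N := by
  have ex := cofactor_exchange (Gm N)
    (Matrix.of fun k l => ((l:ℕ):ℝ) • pSchurZ (aaF N (k:ℕ) + 2 + ((l:ℕ):ℤ)))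
  simp only [Matrix.of_apply] at ex
  rw [ex]
  have hsm : ∀ l : Fin (N+2), ((Gm N).updateCol l
      (fun k => ((l:ℕ):ℝ) • pSchurZ (aaF N (k:ℕ) + 2 + ((l:ℕ):ℤ)))).det
      = ((l:ℕ):ℝ) • ((Gm N).updateCol l
      (fun k => pSchurZ (aaF N (k:ℕ) + 2 + ((l:ℕ):ℤ)))).det := by
    intro l
    exact det_updateCol_smul_real (Gm N) l _ _
  rw [Finset.sum_congr rfl (fun l _ => hsm l)]
  rw [fin_sum_split2 (⟨N, by omega⟩ : Fin (N+2)) (⟨N+1, by omega⟩ : Fin (N+2))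
      (Fin.ne_of_val_ne (show (N:ℕ) ≠ N+1 by omega))
      _ (fun l hl1 hl2 => by
        rw [col2_zero N l (fun h => hl1 (Fin.ext h)) (fun h => hl2 (Fin.ext h)), smul_zero])]
  show ((N:ℕ):ℝ) • y1D N + ((N+1:ℕ):ℝ) • y2D N = _
  push_cast
  ring_nf

lemma S3_eq (N : ℕ) :
    ∑ k : Fin (N+2), ((Gm N).updateRow k
        (fun l => X 0 * pSchurZ (aaF N (k:ℕ) + 1 + ((l:ℕ):ℤ)))).det
    = X 0 * y3D N := by
  have hsm : ∀ k : Fin (N+2), ((Gm N).updateRow k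
      (fun l => X 0 * pSchurZ (aaF N (k:ℕ) + 1 + ((l:ℕ):ℤ)))).det
      = X 0 * ((Gm N).updateRow k (fun l => pSchurZ (aaF N (k:ℕ) + 1 + ((l:ℕ):ℤ)))).det := by
    intro k
    rw [show (fun l : Fin (N+2) => X 0 * pSchurZ (aaF N (k:ℕ) + 1 + ((l:ℕ):ℤ)))
        = (X 0 : MvPolynomial ℕ ℝ) • (fun l : Fin (N+2) => pSchurZ (aaF N (k:ℕ) + 1 + ((l:ℕ):ℤ)))
        from rfl]
    rw [Matrix.det_updateRow_smul]
  rw [Finset.sum_congr rfl (fun k _ => hsm k), ← Finset.mul_sum, exchange1 N]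

lemma S4_eq (N : ℕ) :
    ∑ k : Fin (N+2), ((Gm N).updateRow k
        (fun l => (2:ℝ) • (X 1 * pSchurZ (aaF N (k:ℕ) + ((l:ℕ):ℤ))))).det
    = (2*(N:ℝ)+4) • (X 1 * (Gm N).det) := by
  have hsm : ∀ k : Fin (N+2), ((Gm N).updateRow k
      (fun l => (2:ℝ) • (X 1 * pSchurZ (aaF N (k:ℕ) + ((l:ℕ):ℤ))))).det
      = (2:ℝ) • (X 1 * (Gm N).det) := by
    intro k
    rw [show (fun l : Fin (N+2) => (2:ℝ) • (X 1 * pSchurZ (aaF N (k:ℕ) + ((l:ℕ):ℤ))))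
        = (2:ℝ) • ((X 1 : MvPolynomial ℕ ℝ) • (Gm N k)) from rfl]
    rw [det_updateRow_smul_real, Matrix.det_updateRow_smul, Matrix.updateRow_eq_self]
  rw [Finset.sum_congr rfl (fun k _ => hsm k), Finset.sum_const, Finset.card_univ,
    Fintype.card_fin, ← Nat.cast_smul_eq_nsmul ℝ, smul_smul]
  congr 1
  push_cast
  ring

lemma aaF_le (N k : ℕ) : aaF N k ≤ N := by
  simp only [aaF]
  split_ifs <;> omega

lemma det_updateRow_mul_smul {n : ℕ} (A : Matrix (Fin n) (Fin n) (MvPolynomial ℕ ℝ))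
    (k : Fin n) (c : ℝ) (p : MvPolynomial ℕ ℝ) (w : Fin n → MvPolynomial ℕ ℝ) :
    (A.updateRow k (fun l => c • (p * w l))).det = c • (p * (A.updateRow k w).det) := by
  rw [show (fun l => c • (p * w l)) = c • (p • w) from rfl, det_updateRow_smul_real,
    Matrix.det_updateRow_smul]

set_option maxHeartbeats 2000000 in
lemma main_sum (N : ℕ) (hN : 1 ≤ N) :
    ∑ m ∈ Finset.range (2*N+2), ((m:ℝ)+3) • (X (m+2) * pderiv m ((Gm N).det))
    = ((N:ℝ)+2) • sMuD N + ((1:ℝ)-(N:ℝ)) • zD N + ((N:ℝ) • y1D N + ((N:ℝ)+1) • y2D N)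
      - X 0 * y3D N - (2*(N:ℝ)+4) • (X 1 * (Gm N).det) := by
  have hA : ∀ m : ℕ, pderiv m ((Gm N).det)
      = ∑ k, ((Gm N).updateRow k
          (fun l => pSchurZ (aaF N (k:ℕ) + 2 + ((l:ℕ):ℤ) - 3 - (m:ℤ)))).det := by
    intro m
    rw [derivation_det (pderiv m) (Gm N)]
    apply Finset.sum_congr rfl
    intro k _
    have h : (fun l : Fin (N+2) => pderiv m (Gm N k l))
        = fun l : Fin (N+2) => pSchurZ (aaF N (k:ℕ) + 2 + ((l:ℕ):ℤ) - 3 - (m:ℤ)) := by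
      funext l
      rw [Gm_apply, pderiv_pSchurZ]
      apply pSchurZ_congr
      ring
    rw [h]
  have hB1 : ∀ m ∈ Finset.range (2*N+2), ((m:ℝ)+3) • (X (m+2) * pderiv m ((Gm N).det))
      = ∑ k : Fin (N+2), ((Gm N).updateRow k (fun l => ((m:ℝ)+3) •
          (X (m+2) * pSchurZ (aaF N (k:ℕ) + 2 + ((l:ℕ):ℤ) - 3 - (m:ℤ))))).det := by
    intro m _
    rw [hA m, Finset.mul_sum, Finset.smul_sum]
    exact Finset.sum_congr rfl (fun k _ =>
      (det_updateRow_mul_smul (Gm N) k ((m:ℝ)+3) (X (m+2)) _).symm)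
  rw [Finset.sum_congr rfl hB1, Finset.sum_comm]
  have hC : ∀ k : Fin (N+2), ∑ m ∈ Finset.range (2*N+2),
      ((Gm N).updateRow k (fun l => ((m:ℝ)+3) •
        (X (m+2) * pSchurZ (aaF N (k:ℕ) + 2 + ((l:ℕ):ℤ) - 3 - (m:ℤ))))).det
      = ((Gm N).updateRow k (fun l => ∑ m ∈ Finset.range (2*N+2), ((m:ℝ)+3) •
          (X (m+2) * pSchurZ (aaF N (k:ℕ) + 2 + ((l:ℕ):ℤ) - 3 - (m:ℤ))))).det := by
    intro k
    rw [show (fun l : Fin (N+2) => ∑ m ∈ Finset.range (2*N+2), ((m:ℝ)+3) •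
          (X (m+2) * pSchurZ (aaF N (k:ℕ) + 2 + ((l:ℕ):ℤ) - 3 - (m:ℤ))))
        = ∑ m ∈ Finset.range (2*N+2), (fun l : Fin (N+2) => ((m:ℝ)+3) •
          (X (m+2) * pSchurZ (aaF N (k:ℕ) + 2 + ((l:ℕ):ℤ) - 3 - (m:ℤ)))) from by
      funext l
      rw [Finset.sum_apply]]
    rw [det_updateRow_finset_sum]
  rw [Finset.sum_congr rfl (fun k _ => hC k)]
  have hD : ∀ k : Fin (N+2), (fun l : Fin (N+2) => ∑ m ∈ Finset.range (2*N+2), ((m:ℝ)+3) •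
          (X (m+2) * pSchurZ (aaF N (k:ℕ) + 2 + ((l:ℕ):ℤ) - 3 - (m:ℤ))))
      = ((fun l : Fin (N+2) => (((aaF N (k:ℕ) : ℤ):ℝ)+2) • pSchurZ (aaF N (k:ℕ) + 2 + ((l:ℕ):ℤ)))
          + (fun l : Fin (N+2) => ((l:ℕ):ℝ) • pSchurZ (aaF N (k:ℕ) + 2 + ((l:ℕ):ℤ))))
        - ((fun l : Fin (N+2) => X 0 * pSchurZ (aaF N (k:ℕ) + 1 + ((l:ℕ):ℤ)))
          + (fun l : Fin (N+2) => (2:ℝ) • (X 1 * pSchurZ (aaF N (k:ℕ) + ((l:ℕ):ℤ))))) := by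
    intro k
    funext l
    have hkey := key_row N (aaF N (k:ℕ) + 2 + ((l:ℕ):ℤ))
      (by have h1 := aaF_le N (k:ℕ); have h2 := l.isLt; omega)
    rw [hkey]
    simp only [Pi.add_apply, Pi.sub_apply]
    rw [pSchurZ_congr (show aaF N (k:ℕ) + 2 + ((l:ℕ):ℤ) - 1 = aaF N (k:ℕ) + 1 + ((l:ℕ):ℤ) by ring),
      pSchurZ_congr (show aaF N (k:ℕ) + 2 + ((l:ℕ):ℤ) - 2 = aaF N (k:ℕ) + ((l:ℕ):ℤ) by ring)]
    rw [show ((aaF N (k:ℕ) + 2 + ((l:ℕ):ℤ) : ℤ):ℝ)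
        = ((((aaF N (k:ℕ) : ℤ):ℝ))+2) + ((l:ℕ):ℝ) by push_cast; ring, add_smul]
    ring
  rw [Finset.sum_congr rfl (fun k _ => by rw [hD k, det_updateRow_sub, Matrix.det_updateRow_add, Matrix.det_updateRow_add])]
  rw [Finset.sum_sub_distrib, Finset.sum_add_distrib, Finset.sum_add_distrib]
  have hS1 : ∑ k : Fin (N+2), ((Gm N).updateRow k
      (fun l => (((aaF N (k:ℕ) : ℤ):ℝ)+2) • pSchurZ (aaF N (k:ℕ) + 2 + ((l:ℕ):ℤ)))).det
      = ((N:ℝ)+2) • sMuD N + ((1:ℝ)-(N:ℝ)) • zD N := by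
    rw [← S1_eq N hN]
    exact Finset.sum_congr rfl (fun k _ => det_updateRow_smul_real (Gm N) k _ _)
  rw [hS1, S2_eq N, S3_eq N, S4_eq N]
  ring


/-- Lemma 3: for `N ≥ 1`,
`(2N+1) s_{(N+2,N-1,…,1)} = [t₁²/2 + (2N+1)t₂ + ∑_{m≥1}(m+2) t_{m+2} ∂/∂t_m] s_{(N,N-1,…,1)}`.
Here `t_m = X (m-1)`, and the sum over `m` is truncated at `2N+2`, beyond which
`∂s_{(N,…,1)}/∂t_m = 0` since only `t₁,…,t_{2N-1}` occur. -/
theorem schur_staircase_lemma (N : ℕ) (hN : 1 ≤ N) :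
    (2 * (N : ℝ) + 1) • sStairPlus N =
      ((1 : ℝ) / 2) • ((MvPolynomial.X 0) ^ 2 * sStair N) +
        (2 * (N : ℝ) + 1) • (MvPolynomial.X 1 * sStair N) +
        ∑ m ∈ Finset.range (2 * N + 2),
          ((m : ℝ) + 3) • (MvPolynomial.X (m + 2) * MvPolynomial.pderiv m (sStair N)) := by
  have hs : sStair N = (Gm N).det := (detGm N).symm
  rw [hs, main_sum N hN]
  have hz : zD N = y1D N + y2D N - sMuD N := by
    rw [← exchange2 N]; ring
  have h1 : y1D N = (Gm N).det * (pSchur 2 - X 0 * X 0) := by rw [y1D_eq, detGm]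
  have h2 : y2D N = (Gm N).det * pSchur 2 := by rw [y2D_eq, detGm]
  have h3 : y3D N = (Gm N).det * X 0 := by rw [y3D_eq, detGm]
  have h4 : sMuD N = sStairPlus N := sMuD_eq N hN
  rw [hz, h1, h2, h3, h4, pSchur_two]
  have hrel : (2 : MvPolynomial ℕ ℝ) * MvPolynomial.C (2⁻¹:ℝ) = 1 := by
    rw [show (2 : MvPolynomial ℕ ℝ) = MvPolynomial.C (2:ℝ) from (map_ofNat _ 2).symm, ← map_mul]
    norm_num
  rw [show ((1:ℝ)/2) = (2⁻¹:ℝ) by norm_num]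
  simp only [MvPolynomial.smul_eq_C_mul, map_add, map_sub, map_mul, map_one, map_ofNat,
    map_natCast]
  linear_combination (-(2: MvPolynomial ℕ ℝ) * ((X 0)^2 * (Gm N).det)) * hrel
end

section
/- Let p̄_k(x,v) be defined by (1+λ)^{v+1/2} exp(xλ + (v/2)λ²) = ∑_{k≥0} p̄_k(x,v)λ^k, and p_k(x,n) by (1+λ)^{n} e^{xλ} = ∑ p_k λ^k with n = v + 1/2. Then each p̄_k is a finite linear combination of p_k, p_{k-2}, p_{k-4}, …, and consequently the N×N determinants det(p̄_{N-2i+j+1})_{i,j} and det(p_{N-2i+j+1})_{i,j} are equal, i.e. τ_N(x, v+1/2) = det(p̄_{N-2i+j+1}(x,v))_{1≤i,j≤N}. -/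
/-- Generalized binomial coefficient `binom(n, m)` for real `n`. -/
noncomputable def genBinom (n : ℝ) (m : ℕ) : ℝ :=
  (∏ i ∈ Finset.range m, (n - i)) / (m.factorial : ℝ)

/-- The polynomials `p_k(x,n)` with `(1+λ)^n e^{xλ} = ∑ p_k λ^k`, `p_k = 0` for `k < 0`. -/
noncomputable def pP (n : ℝ) (k : ℤ) (x : ℝ) : ℝ :=
  if k < 0 then 0 else
    ∑ j ∈ Finset.range (k.toNat + 1), genBinom n (k.toNat - j) * x ^ j / (j.factorial : ℝ)

/-- `τ_N = det(p_{N-2(i-1)+(j-1)})_{1≤i,j≤N}`, `τ_0 = τ_{-1} = 1`. -/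
noncomputable def tauP (n : ℝ) (N : ℤ) (x : ℝ) : ℝ :=
  if N ≤ 0 then 1 else
    Matrix.det (Matrix.of fun i j : Fin N.toNat =>
      pP n (N - 2 * ((i : ℕ) : ℤ) + ((j : ℕ) : ℤ)) x)

/-- `p̄_k(x,v)`: the coefficients of `(1+λ)^{v+1/2} exp(xλ + (v/2)λ²)`, explicitly
`p̄_k = ∑_{2m≤k} (v/2)^m/m! · ∑_{j=0}^{k-2m} binom(v+1/2, k-2m-j) x^j/j!`,
with `p̄_k = 0` for `k < 0`. -/
noncomputable def pbar (v : ℝ) (k : ℤ) (x : ℝ) : ℝ :=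
  if k < 0 then 0 else
    ∑ m ∈ Finset.range (k.toNat / 2 + 1),
      (v / 2) ^ m / (m.factorial : ℝ) *
        ∑ j ∈ Finset.range ((k.toNat - 2 * m) + 1),
          genBinom (v + 1 / 2) ((k.toNat - 2 * m) - j) * x ^ j / (j.factorial : ℝ)

/-! The factor `exp((v/2)λ²)` mixes only indices of equal parity: `p̄_k = ∑ₘ cₘ p_{k-2m}` with
`cₘ = (v/2)^m/m!`. In the Jacobi–Trudi matrix `(f(N - 2i + j))` row `i + m` is row `i` shifted by
`2m`, so the matrix of the `p̄` is an upper unitriangular Toeplitz matrix times that of the `p`. -/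

open Finset

section JacobiTrudi

variable {R : Type*} [CommRing R]

def jacobiTrudiMatrix (N : ℕ) (f : ℤ → R) : Matrix (Fin N) (Fin N) R :=
  Matrix.of fun i j => f ((N : ℤ) - 2 * ((i : ℕ) : ℤ) + ((j : ℕ) : ℤ))

def upperToeplitz (N : ℕ) (c : ℕ → R) : Matrix (Fin N) (Fin N) R :=
  Matrix.of fun i t => if (i : ℕ) ≤ t then c (t - i) else 0

theorem det_upperToeplitz (N : ℕ) (c : ℕ → R) : (upperToeplitz N c).det = c 0 ^ N := by
  rw [Matrix.det_of_isUpperTriangular]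
  · simp [upperToeplitz]
  · intro i t hti
    exact if_neg (not_le.mpr (Fin.lt_def.mp hti))

theorem upperToeplitz_mul_jacobiTrudiMatrix_apply {N : ℕ} (c : ℕ → R) {f : ℤ → R}
    (hf : ∀ k < 0, f k = 0) (i j : Fin N) :
    (upperToeplitz N c * jacobiTrudiMatrix N f) i j =
      ∑ m ∈ range N, c m * f ((N : ℤ) - 2 * ((i : ℕ) : ℤ) + ((j : ℕ) : ℤ) - 2 * m) := by
  set G : ℕ → R := fun t => (if (i : ℕ) ≤ t then c (t - i) else 0) *
    f ((N : ℤ) - 2 * (t : ℤ) + ((j : ℕ) : ℤ))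
  -- the terms with `i + m ≥ N` have negative index, so the sum may run over all of `range N`
  have htail : ∑ m ∈ Ico (N - i) N,
      c m * f ((N : ℤ) - 2 * ((i : ℕ) : ℤ) + ((j : ℕ) : ℤ) - 2 * m) = 0 :=
    sum_eq_zero fun m hm => by
      rw [mem_Ico] at hm
      rw [hf _ (by omega), mul_zero]
  calc (upperToeplitz N c * jacobiTrudiMatrix N f) i j
      = ∑ t ∈ range N, G t := by
        simp only [Matrix.mul_apply, upperToeplitz, jacobiTrudiMatrix, Matrix.of_apply]
        exact Fin.sum_univ_eq_sum_range G N
    _ = ∑ t ∈ Ico (i : ℕ) N, G t := by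
        rw [← sum_range_add_sum_Ico _ i.2.le, sum_eq_zero fun t ht => ?_, zero_add]
        rw [mem_range] at ht
        simp [G, not_le.mpr ht]
    _ = ∑ m ∈ range (N - i),
          c m * f ((N : ℤ) - 2 * ((i : ℕ) : ℤ) + ((j : ℕ) : ℤ) - 2 * m) := by
        rw [sum_Ico_eq_sum_range]
        refine sum_congr rfl fun m _ => ?_
        simp only [G, if_pos (Nat.le_add_right _ _), Nat.add_sub_cancel_left]
        congr 2
        push_cast
        ring
    _ = _ := by
        rw [← sum_range_add_sum_Ico _ (Nat.sub_le N i), htail, add_zero]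

theorem det_jacobiTrudiMatrix_of_eq_sum {N : ℕ} {f g : ℤ → R} (c : ℕ → R)
    (hf : ∀ k < 0, f k = 0) (hg : ∀ k < 2 * (N : ℤ), g k = ∑ m ∈ range N, c m * f (k - 2 * m)) :
    (jacobiTrudiMatrix N g).det = c 0 ^ N * (jacobiTrudiMatrix N f).det := by
  have hprod : jacobiTrudiMatrix N g = upperToeplitz N c * jacobiTrudiMatrix N f := by
    ext i j
    rw [upperToeplitz_mul_jacobiTrudiMatrix_apply c hf, jacobiTrudiMatrix, Matrix.of_apply,
      hg _ (by omega)]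
  rw [hprod, Matrix.det_mul, det_upperToeplitz]

end JacobiTrudi

noncomputable def expHalfSqCoeff (v : ℝ) (m : ℕ) : ℝ := (v / 2) ^ m / (m.factorial : ℝ)

theorem pP_of_neg (n : ℝ) {k : ℤ} (x : ℝ) (hk : k < 0) : pP n k x = 0 := by
  simp [pP, hk]

theorem pbar_natCast (v : ℝ) (k : ℕ) (x : ℝ) :
    pbar v (k : ℤ) x = ∑ m ∈ range (k / 2 + 1),
      expHalfSqCoeff v m * pP (v + 1 / 2) ((k : ℤ) - 2 * m) x := by
  rw [pbar, if_neg (by omega), Int.toNat_natCast]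
  refine sum_congr rfl fun m hm => ?_
  rw [mem_range] at hm
  rw [expHalfSqCoeff, pP, if_neg (by omega), show ((k : ℤ) - 2 * m).toNat = k - 2 * m by omega]

theorem pbar_eq_sum_range (v : ℝ) {k : ℤ} {M : ℕ} (hM : k < 2 * M) (x : ℝ) :
    pbar v k x = ∑ m ∈ range M, expHalfSqCoeff v m * pP (v + 1 / 2) (k - 2 * m) x := by
  rcases lt_or_ge k 0 with hk | hk
  · rw [pbar, if_pos hk]
    exact (sum_eq_zero fun m _ => by rw [pP_of_neg _ _ (by omega), mul_zero]).symm
  · lift k to ℕ using hk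
    rw [pbar_natCast, ← sum_range_add_sum_Ico _ (by omega : k / 2 + 1 ≤ M), left_eq_add]
    refine sum_eq_zero fun m hm => ?_
    rw [mem_Ico] at hm
    rw [pP_of_neg _ _ (by omega), mul_zero]

theorem tauP_natCast (n : ℝ) (N : ℕ) (x : ℝ) :
    tauP n N x = (jacobiTrudiMatrix N fun k => pP n k x).det := by
  rcases N with _ | N
  · simp [tauP]
  · rw [tauP, if_neg (by omega)]
    rfl

/-- each `p̄_k` is a linear combination of `p_k, p_{k-2}, p_{k-4}, …`
(for `n = v + 1/2`), and consequently the Jacobi–Trudi determinants built from the `p̄`'s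
and from the `p`'s coincide: `τ_N(x, v+1/2) = det(p̄_{N-2(i-1)+(j-1)}(x,v))`. -/
theorem pbar_combination_and_det (v : ℝ) :
    (∀ k : ℕ, ∃ c : ℕ → ℝ, ∀ x : ℝ,
        pbar v (k : ℤ) x =
          ∑ m ∈ Finset.range (k / 2 + 1), c m * pP (v + 1 / 2) ((k : ℤ) - 2 * m) x) ∧
    (∀ N : ℕ, ∀ x : ℝ,
        Matrix.det (Matrix.of fun i j : Fin N =>
            pbar v ((N : ℤ) - 2 * ((i : ℕ) : ℤ) + ((j : ℕ) : ℤ)) x) =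
          tauP (v + 1 / 2) (N : ℤ) x) := by
  refine ⟨fun k => ⟨expHalfSqCoeff v, pbar_natCast v k⟩, fun N x => ?_⟩
  rw [tauP_natCast]
  calc (jacobiTrudiMatrix N fun k => pbar v k x).det
      = expHalfSqCoeff v 0 ^ N * (jacobiTrudiMatrix N fun k => pP (v + 1 / 2) k x).det :=
        det_jacobiTrudiMatrix_of_eq_sum _ (fun k hk => pP_of_neg _ x hk)
          (fun k hk => pbar_eq_sum_range v hk x)
    _ = _ := by simp [expHalfSqCoeff]
end
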